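/- Let u, v ∈ ℍ^{n+1} be non-proportional null vectors with ⟨u,v⟩ = −1, and let z ∈ ℍ^{n+1} be a negative vector. Set η = ⟨u,z⟩⟨u,v⟩⁻¹⟨z,v⟩⟨z,z⟩⁻¹ and γ(t) = u e^{t/2} + v e^{−t/2} for t ∈ ℝ (so ⟨γ(t),γ(t)⟩ = −2). Then the infimum over t ∈ ℝ of |⟨z,γ(t)⟩|² / (⟨z,z⟩·⟨γ(t),γ(t)⟩) equals |η| + Re(η). (Equivalently, cosh²(ρ(γ_{uv},z)/2) = |η| + Re(η), where ρ(γ_{uv},z) is the Bergman distance from the point represented by z to the geodesic with endpoints represented by u and v.) -/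

import Mathlib

open scoped Quaternion

noncomputable section

/-- The quaternionic Hermitian form of signature (n,1) on ℍ^{n+1}:
`⟨z,w⟩ = w̄₁ z_{n+1} + Σ_{i=2}^n w̄ᵢ zᵢ + w̄_{n+1} z₁`. -/
noncomputable def herm {n : ℕ} (z w : Fin (n+1) → ℍ[ℝ]) : ℍ[ℝ] :=
  star (w 0) * z (Fin.last n)
    + ∑ i ∈ Finset.Ioo (0 : Fin (n+1)) (Fin.last n), star (w i) * z i
    + star (w (Fin.last n)) * z 0

/-- `w` is (right-)proportional to `z`: `w = zλ` for some `λ ∈ ℍ`. -/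
def Prp {n : ℕ} (z w : Fin (n+1) → ℍ[ℝ]) : Prop :=
  ∃ lam : ℍ[ℝ], w = fun i => z i * lam

/-- Right scalar multiplication on ℍ^{n+1}. -/
noncomputable def smulR {n : ℕ} (z : Fin (n+1) → ℍ[ℝ]) (lam : ℍ[ℝ]) :
    Fin (n+1) → ℍ[ℝ] := fun i => z i * lam

/-- The quaternionic triple product `⟨p₁,p₂,p₃⟩ = ⟨p₂,p₁⟩⟨p₃,p₂⟩⟨p₁,p₃⟩`. -/
noncomputable def tri {n : ℕ} (p₁ p₂ p₃ : Fin (n+1) → ℍ[ℝ]) : ℍ[ℝ] :=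
  herm p₂ p₁ * herm p₃ p₂ * herm p₁ p₃

/-- The quaternionic Cartan angular invariant
`𝔸(p₁,p₂,p₃) = arccos(Re(−⟨p₁,p₂,p₃⟩)/|⟨p₁,p₂,p₃⟩|)`. -/
noncomputable def cartan {n : ℕ} (p₁ p₂ p₃ : Fin (n+1) → ℍ[ℝ]) : ℝ :=
  Real.arccos ((-(tri p₁ p₂ p₃)).re / ‖tri p₁ p₂ p₃‖)

/-- The quaternionic cross-ratio `𝕏(p₁,p₂,p₃,p₄) = ⟨p₃,p₁⟩⟨p₃,p₂⟩⁻¹⟨p₄,p₂⟩⟨p₄,p₁⟩⁻¹`. -/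
noncomputable def crossX {n : ℕ} (p₁ p₂ p₃ p₄ : Fin (n+1) → ℍ[ℝ]) : ℍ[ℝ] :=
  herm p₃ p₁ * (herm p₃ p₂)⁻¹ * herm p₄ p₂ * (herm p₄ p₁)⁻¹

/-- The group Sp(n,1) of quaternionic matrices preserving the Hermitian form. -/
def SpGrp (n : ℕ) : Set (Matrix (Fin (n+1)) (Fin (n+1)) ℍ[ℝ]) :=
  {g | ∀ z w : Fin (n+1) → ℍ[ℝ], herm (g.mulVec z) (g.mulVec w) = herm z w}

/-- Similarity of quaternions: `b = μ a μ⁻¹` for some nonzero `μ`. -/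
def QSim (a b : ℍ[ℝ]) : Prop := ∃ mu : ℍ[ℝ], mu ≠ 0 ∧ b = mu * a * mu⁻¹

/-- The geodesic `γ(t) = u e^{t/2} + v e^{-t/2}`. -/
noncomputable def geo {n : ℕ} (u v : Fin (n+1) → ℍ[ℝ]) (t : ℝ) : Fin (n+1) → ℍ[ℝ] :=
  fun i => u i * ((Real.exp (t/2) : ℝ) : ℍ[ℝ]) + v i * ((Real.exp (-t/2) : ℝ) : ℍ[ℝ])

/-- `η(u,v,z) = ⟨u,z⟩⟨u,v⟩⁻¹⟨z,v⟩⟨z,z⟩⁻¹`. -/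
noncomputable def etaq {n : ℕ} (u v z : Fin (n+1) → ℍ[ℝ]) : ℍ[ℝ] :=
  herm u z * (herm u v)⁻¹ * herm z v * (herm z z)⁻¹


/-!
With `a = ⟨z,u⟩`, `b = ⟨z,v⟩` and `r = ⟨z,z⟩ < 0`, sesquilinearity gives `⟨γ(t),γ(t)⟩ = -2` and
`⟨z,γ(t)⟩ = a e^{t/2} + b e^{-t/2}`, so the quotient is
`(|a|² e^t + |b|² e^{-t} + 2 Re(ā b)) / (-2r)`. By AM-GM its infimum over `t` is
`(|a||b| + Re(ā b)) / (-r)`, and since `⟨u,v⟩ = -1` we have `η = -ā b r⁻¹`, whose norm plus real part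
is exactly that value.
-/

open scoped Quaternion
open Real

section ExpInfimum

lemma two_mul_mul_le_sq_mul_exp_add_sq_mul_exp_neg (a b t : ℝ) :
    2 * a * b ≤ a ^ 2 * exp t + b ^ 2 * exp (-t) := by
  have hexp : exp t * exp (-t) = 1 := by rw [← exp_add, add_neg_cancel, exp_zero]
  -- `a² x + b²/x - 2ab = (a x - b)² / x` with `x = e^t`
  nlinarith [sq_nonneg (a * exp t - b), exp_pos t, exp_pos (-t)]

lemma exists_sq_mul_exp_add_sq_mul_exp_neg_le {a b ε : ℝ} (ha : 0 ≤ a) (hb : 0 ≤ b)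
    (hε : 0 < ε) : ∃ t : ℝ, a ^ 2 * exp t + b ^ 2 * exp (-t) ≤ 2 * a * b + ε := by
  set δ := ε / (a + b + 1) with hδ
  have hδpos : 0 < δ := by positivity
  have hδε : δ * (a + b) ≤ ε := by
    rw [hδ, div_mul_eq_mul_div, div_le_iff₀ (by positivity)]
    nlinarith
  -- `e^t = (b + δ)/(a + δ)` is a minimiser perturbed away from the degenerate cases `a = 0`, `b = 0`
  refine ⟨log ((b + δ) / (a + δ)), ?_⟩
  rw [exp_neg, exp_log (by positivity), inv_div]
  have hA : a ^ 2 * ((b + δ) / (a + δ)) ≤ a * (b + δ) := by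
    rw [mul_div_assoc', div_le_iff₀ (by positivity)]
    nlinarith [mul_nonneg (mul_nonneg ha (by positivity : (0 : ℝ) ≤ b + δ)) hδpos.le]
  have hB : b ^ 2 * ((a + δ) / (b + δ)) ≤ b * (a + δ) := by
    rw [mul_div_assoc', div_le_iff₀ (by positivity)]
    nlinarith [mul_nonneg (mul_nonneg hb (by positivity : (0 : ℝ) ≤ a + δ)) hδpos.le]
  nlinarith

lemma ciInf_sq_mul_exp_add_sq_mul_exp_neg {a b : ℝ} (ha : 0 ≤ a) (hb : 0 ≤ b) :
    ⨅ t : ℝ, a ^ 2 * exp t + b ^ 2 * exp (-t) = 2 * a * b := by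
  refine le_antisymm (le_of_forall_pos_le_add fun ε hε => ?_)
    (le_ciInf (two_mul_mul_le_sq_mul_exp_add_sq_mul_exp_neg a b))
  obtain ⟨t, ht⟩ := exists_sq_mul_exp_add_sq_mul_exp_neg_le ha hb hε
  exact (ciInf_le ⟨_, Set.forall_mem_range.2 (two_mul_mul_le_sq_mul_exp_add_sq_mul_exp_neg a b)⟩
    t).trans ht

lemma ciInf_sq_mul_exp_add_sq_mul_exp_neg_add_div {a b : ℝ} (ha : 0 ≤ a) (hb : 0 ≤ b) (c : ℝ)
    {d : ℝ} (hd : 0 ≤ d) :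
    ⨅ t : ℝ, (a ^ 2 * exp t + b ^ 2 * exp (-t) + c) / d = (2 * a * b + c) / d := by
  have hbdd : BddBelow (Set.range fun t : ℝ => a ^ 2 * exp t + b ^ 2 * exp (-t)) :=
    ⟨_, Set.forall_mem_range.2 (two_mul_mul_le_sq_mul_exp_add_sq_mul_exp_neg a b)⟩
  simp only [div_eq_mul_inv]
  rw [← Real.iInf_mul_of_nonneg (inv_nonneg.2 hd), ← ciInf_add hbdd,
    ciInf_sq_mul_exp_add_sq_mul_exp_neg ha hb]

end ExpInfimum

lemma Quaternion.real_inner_eq_re_star_mul (a b : ℍ[ℝ]) : inner ℝ a b = (star a * b).re := by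
  simp only [Quaternion.inner_def, Quaternion.re_mul, Quaternion.re_star, Quaternion.imI_star,
    Quaternion.imJ_star, Quaternion.imK_star]
  ring

section Herm

variable {n : ℕ}

lemma herm_add_right (z w₁ w₂ : Fin (n+1) → ℍ[ℝ]) :
    herm z (fun i => w₁ i + w₂ i) = herm z w₁ + herm z w₂ := by
  simp only [herm, star_add, add_mul, Finset.sum_add_distrib]
  abel

lemma herm_add_left (z₁ z₂ w : Fin (n+1) → ℍ[ℝ]) :
    herm (fun i => z₁ i + z₂ i) w = herm z₁ w + herm z₂ w := by
  simp only [herm, mul_add, Finset.sum_add_distrib]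
  abel

lemma herm_mul_coe_right (z w : Fin (n+1) → ℍ[ℝ]) (c : ℝ) :
    herm z (fun i => w i * (c : ℍ[ℝ])) = c • herm z w := by
  simp only [herm, star_mul, Quaternion.star_coe, Quaternion.coe_mul_eq_smul,
    smul_mul_assoc, ← Finset.smul_sum, ← smul_add]

lemma herm_mul_coe_left (z w : Fin (n+1) → ℍ[ℝ]) (c : ℝ) :
    herm (fun i => z i * (c : ℍ[ℝ])) w = c • herm z w := by
  simp only [herm, Quaternion.mul_coe_eq_smul, mul_smul_comm, ← Finset.smul_sum, ← smul_add]

lemma herm_swap (z w : Fin (n+1) → ℍ[ℝ]) : herm w z = star (herm z w) := by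
  simp only [herm, star_add, star_mul, star_star, star_sum]
  abel

lemma herm_self_eq_coe_re (z : Fin (n+1) → ℍ[ℝ]) : herm z z = ((herm z z).re : ℍ[ℝ]) :=
  Quaternion.star_eq_self.mp (herm_swap z z).symm

lemma herm_geo_right (w u v : Fin (n+1) → ℍ[ℝ]) (t : ℝ) :
    herm w (geo u v t) = exp (t / 2) • herm w u + exp (-t / 2) • herm w v := by
  unfold geo
  rw [herm_add_right, herm_mul_coe_right, herm_mul_coe_right]

lemma herm_geo_left (w u v : Fin (n+1) → ℍ[ℝ]) (t : ℝ) :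
    herm (geo u v t) w = exp (t / 2) • herm u w + exp (-t / 2) • herm v w := by
  unfold geo
  rw [herm_add_left, herm_mul_coe_left, herm_mul_coe_left]

lemma herm_geo_self {u v : Fin (n+1) → ℍ[ℝ]} (huu : herm u u = 0) (hvv : herm v v = 0)
    (huv : herm u v = -1) (t : ℝ) : herm (geo u v t) (geo u v t) = -2 := by
  have hvu : herm v u = -1 := by rw [herm_swap, huv, star_neg, star_one]
  have hexp : exp (t / 2) * exp (-t / 2) = 1 := by rw [← exp_add, neg_div, add_neg_cancel, exp_zero]
  rw [herm_geo_right, herm_geo_left, herm_geo_left, huu, hvv, huv, hvu]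
  simp only [smul_zero, zero_add, add_zero, smul_smul, smul_neg, mul_comm (exp (-t / 2)), hexp,
    one_smul]
  norm_num

lemma norm_herm_geo_sq (z u v : Fin (n+1) → ℍ[ℝ]) (t : ℝ) :
    ‖herm z (geo u v t)‖ ^ 2 = ‖herm z u‖ ^ 2 * exp t + ‖herm z v‖ ^ 2 * exp (-t)
      + 2 * (star (herm z u) * herm z v).re := by
  have hsq : ∀ s : ℝ, exp (s / 2) ^ 2 = exp s := fun s => by rw [← exp_nat_mul]; congr 1; ring
  have hexp : exp (t / 2) * exp (-t / 2) = 1 := by rw [← exp_add, neg_div, add_neg_cancel, exp_zero]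
  rw [herm_geo_right, norm_add_sq_real, norm_smul, norm_smul, real_inner_smul_left,
    real_inner_smul_right, Quaternion.real_inner_eq_re_star_mul, norm_of_nonneg (exp_pos _).le,
    norm_of_nonneg (exp_pos _).le, mul_pow, mul_pow, hsq, hsq]
  linear_combination (2 * (star (herm z u) * herm z v).re) * hexp

lemma etaq_eq {u v z : Fin (n+1) → ℍ[ℝ]} (huv : herm u v = -1) :
    etaq u v z = -(star (herm z u) * herm z v) * (((herm z z).re⁻¹ : ℝ) : ℍ[ℝ]) := by
  rw [etaq, herm_swap z u, huv, herm_self_eq_coe_re z, Quaternion.coe_inv, inv_neg, inv_one,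
    mul_neg_one, neg_mul, Quaternion.re_coe]

end Herm

theorem stmt8_general {n : ℕ} (u v z : Fin (n+1) → ℍ[ℝ])
    (huu : herm u u = 0) (hvv : herm v v = 0)
    (huv : herm u v = -1)
    (hz : (herm z z).re < 0) :
    (⨅ t : ℝ, ‖herm z (geo u v t)‖^2
        / ((herm z z).re * (herm (geo u v t) (geo u v t)).re))
      = ‖etaq u v z‖ + (etaq u v z).re := by
  set a := herm z u
  set b := herm z v
  set r := (herm z z).re
  have hquot : ∀ t : ℝ, ‖herm z (geo u v t)‖ ^ 2 / (r * (herm (geo u v t) (geo u v t)).re)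
      = (‖a‖ ^ 2 * exp t + ‖b‖ ^ 2 * exp (-t) + 2 * (star a * b).re) / (-2 * r) := fun t => by
    rw [norm_herm_geo_sq, herm_geo_self huu hvv huv, Quaternion.re_neg,
      show (2 : ℍ[ℝ]).re = 2 from rfl, mul_comm r, neg_mul]
  have hnorm : ‖etaq u v z‖ = ‖a‖ * ‖b‖ / -r := by
    rw [etaq_eq huv, norm_mul, norm_neg, norm_mul, Quaternion.norm_star, Quaternion.norm_coe,
      norm_inv, norm_of_nonpos hz.le, div_eq_mul_inv]
  have hre : (etaq u v z).re = -(star a * b).re / r := by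
    rw [etaq_eq huv, Quaternion.mul_coe_eq_smul, Quaternion.re_smul, Quaternion.re_neg, smul_eq_mul]
    ring
  rw [iInf_congr hquot, ciInf_sq_mul_exp_add_sq_mul_exp_neg_add_div (norm_nonneg a) (norm_nonneg b)
    _ (by linarith), hnorm, hre]
  field_simp
  ring

/-- the infimum over `t ∈ ℝ` of `|⟨z,γ(t)⟩|²/(⟨z,z⟩⟨γ(t),γ(t)⟩)`
equals `|η| + Re η`, i.e. `cosh²(ρ(γ_{uv},z)/2) = |η| + Re η`. -/
theorem stmt8 {n : ℕ} (hn : 2 ≤ n) (u v z : Fin (n+1) → ℍ[ℝ])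
    (hu : u ≠ 0) (hv : v ≠ 0) (huu : herm u u = 0) (hvv : herm v v = 0)
    (hprop : ¬ Prp u v) (huv : herm u v = -1)
    (hz : (herm z z).re < 0) :
    (⨅ t : ℝ, ‖herm z (geo u v t)‖^2
        / ((herm z z).re * (herm (geo u v t) (geo u v t)).re))
      = ‖etaq u v z‖ + (etaq u v z).re :=
  stmt8_general u v z huu hvv huv hz
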